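/- arXiv:2105.02429 — 4 statements merged into one kernel-verified Lean document; each statement's English description precedes it below -/
import Mathlib

section
/- Let P be a finite poset on {1,...,n} and L = g^≺(P) the nilpotent Lie poset algebra, spanned by E_{p,q} for p ≺ q with the commutator bracket. Then the center Z(L) equals the span of {E_{p,q} : p is minimal in P and q is maximal in P and p ≺ q}. -/
/-! The bracket `⁅z, E r s⁆ = z E r s - E r s z` agrees with column `r` of `z` on column `s`
and with minus row `s` of `z` on row `r`, except at the entry `(r, s)`. So `z ∈ L` is central
exactly when, for every `r ≺ s`, column `r` and row `s` of `z` vanish; since `z` is supported on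
pairs `p ≺ q`, this says `z p q = 0` unless `p` is minimal and `q` is maximal. -/

/-- The matrix unit `E p q`. -/
noncomputable def matE {α : Type*} [DecidableEq α] (p q : α) : Matrix α α ℂ :=
  Matrix.single p q 1

section MatrixUnits

variable {α : Type*} [Fintype α] [DecidableEq α]

lemma mem_span_matE_iff (Pred : α → α → Prop) (m : Matrix α α ℂ) :
    m ∈ Submodule.span ℂ {m : Matrix α α ℂ | ∃ p q : α, Pred p q ∧ m = matE p q} ↔
      ∀ p q : α, ¬ Pred p q → m p q = 0 := by
  constructor
  · intro hm
    induction hm using Submodule.span_induction with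
    | mem x hx =>
      obtain ⟨p, q, hpq, rfl⟩ := hx
      intro p' q' h
      have hne : ¬ (p = p' ∧ q = q') := by rintro ⟨rfl, rfl⟩; exact h hpq
      simp [matE, Matrix.single, hne]
    | zero => simp
    | add x y _ _ hx hy => intro p q h; simp [hx p q h, hy p q h]
    | smul c x _ hx => intro p q h; simp [hx p q h]
  · intro h
    rw [Matrix.matrix_eq_sum_single m]
    refine Submodule.sum_mem _ fun p _ => Submodule.sum_mem _ fun q _ => ?_
    by_cases hpq : Pred p q
    · rw [show Matrix.single p q (m p q) = m p q • matE p q by simp [matE]]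
      exact Submodule.smul_mem _ _ (Submodule.subset_span ⟨p, q, hpq, rfl⟩)
    · simp [h p q hpq]

lemma apply_eq_zero_of_lie_matE_eq_zero_left {z : Matrix α α ℂ} {r s i : α}
    (h : ⁅z, matE r s⁆ = 0) (hi : i ≠ r) : z i r = 0 := by
  simpa [Ring.lie_def, matE, hi] using congr_fun₂ h i s

lemma apply_eq_zero_of_lie_matE_eq_zero_right {z : Matrix α α ℂ} {r s j : α}
    (h : ⁅z, matE r s⁆ = 0) (hj : j ≠ s) : z s j = 0 := by
  simpa [Ring.lie_def, matE, hj] using congr_fun₂ h r j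

lemma lie_matE_eq_zero {z : Matrix α α ℂ} {r s : α}
    (hcol : ∀ i, z i r = 0) (hrow : ∀ j, z s j = 0) : ⁅z, matE r s⁆ = 0 := by
  ext i j
  by_cases hj : j = s <;> by_cases hi : i = r <;> simp [Ring.lie_def, matE, hi, hj, hcol, hrow]

end MatrixUnits

lemma lie_eq_zero_of_mem_span {R A : Type*} [CommRing R] [Ring A] [Algebra R A]
    {S : Set A} {z y : A} (h : ∀ x ∈ S, ⁅z, x⁆ = 0) (hy : y ∈ Submodule.span R S) :
    ⁅z, y⁆ = 0 :=
  (Submodule.span_le (p := LinearMap.ker (LinearMap.mulLeft R z - LinearMap.mulRight R z))).mpr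
    h hy

/-- For a finite poset `P` and the nilpotent Lie poset algebra
`L = g^≺(P) = span{E p q : p ≺ q}`, the center `Z(L)` equals the span of the
matrix units `E p q` where `p ≺ q`, `p` is minimal and `q` is maximal. -/
theorem nilpotent_lie_poset_center (α : Type*) [Fintype α] [DecidableEq α] [PartialOrder α] :
    let L : Submodule ℂ (Matrix α α ℂ) :=
      Submodule.span ℂ {m : Matrix α α ℂ | ∃ p q : α, p < q ∧ m = matE p q}
    {z : Matrix α α ℂ | z ∈ L ∧ ∀ y ∈ L, ⁅z, y⁆ = 0} =
      ↑(Submodule.span ℂ {m : Matrix α α ℂ |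
        ∃ p q : α, p < q ∧ (∀ r, ¬ r < p) ∧ (∀ r, ¬ q < r) ∧ m = matE p q}) := by
  intro L
  ext z
  have hZ := mem_span_matE_iff (fun p q : α => p < q ∧ (∀ r, ¬ r < p) ∧ (∀ r, ¬ q < r)) z
  simp only [and_assoc] at hZ
  rw [Set.mem_ofPred_eq, SetLike.mem_coe, hZ, mem_span_matE_iff]
  constructor
  · rintro ⟨hzL, hcomm⟩ p q hpq
    by_cases hlt : p < q
    · have hgen : ∀ {a b}, a < b → ⁅z, matE a b⁆ = 0 :=
        fun hab => hcomm _ (Submodule.subset_span ⟨_, _, hab, rfl⟩)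
      simp only [hlt, true_and, not_and_or, not_forall, not_not] at hpq
      rcases hpq with ⟨r, hrp⟩ | ⟨r, hqr⟩
      · exact apply_eq_zero_of_lie_matE_eq_zero_right (hgen hrp) hlt.ne'
      · exact apply_eq_zero_of_lie_matE_eq_zero_left (hgen hqr) hlt.ne
    · exact hzL p q hlt
  · intro hz
    refine ⟨fun p q hpq => hz p q (hpq ·.1), fun y hy => lie_eq_zero_of_mem_span ?_ hy⟩
    rintro _ ⟨r, s, hrs, rfl⟩
    exact lie_matE_eq_zero (fun i => hz i r fun h => h.2.2 s hrs)
      (fun j => hz s j fun h => h.2.1 r hrs)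
end

section
/- Let L = g(r_0, r_1, r_2) be the nilpotent Lie poset algebra of the three-level poset P(r_0,r_1,r_2), spanned by E_{b_i,m_j}, E_{m_j,t_k}, E_{b_i,t_k}. If r_1 ≥ r_0 or r_1 ≥ r_2, then b(L) = r_0·r_2. -/
/-- The strict order relation of the three-level poset `P(r₀,r₁,r₂)`. -/
def P3lt (r0 r1 r2 : ℕ) : (Fin r0 ⊕ Fin r1 ⊕ Fin r2) → (Fin r0 ⊕ Fin r1 ⊕ Fin r2) → Prop
  | Sum.inl _, Sum.inr _ => True
  | Sum.inr (Sum.inl _), Sum.inr (Sum.inr _) => True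
  | _, _ => False

attribute [local instance 100] LieRing.ofAssociativeRing

section MatrixUnits

variable {α : Type*} [DecidableEq α]

lemma matE_mul_matE [Fintype α] (p q p' q' : α) :
    matE p q * matE p' q' = if q = p' then matE p q' else 0 := by
  split_ifs with hq
  · subst hq
    simp [matE]
  · exact Matrix.single_mul_single_of_ne (c := (1 : ℂ)) p q p' hq 1

lemma finrank_span_matE_of_injective [Fintype α] {ι : Type*} [Fintype ι] {f : ι → α × α}
    (hf : Function.Injective f) :
    Module.finrank ℂ (Submodule.span ℂ (Set.range fun i => matE (f i).1 (f i).2)) =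
      Fintype.card ι := by
  have hli : LinearIndependent ℂ fun i => matE (f i).1 (f i).2 := by
    convert (Matrix.stdBasis ℂ α α).linearIndependent.comp f hf using 1
    funext i
    rw [Function.comp_apply, ← Prod.mk.eta (p := f i), Matrix.stdBasis_eq_single]
    rfl
  exact finrank_span_eq_card hli

end MatrixUnits

namespace P3

abbrev Idx (r0 r1 r2 : ℕ) := Fin r0 ⊕ Fin r1 ⊕ Fin r2

abbrev Mat (r0 r1 r2 : ℕ) := Matrix (Idx r0 r1 r2) (Idx r0 r1 r2) ℂ

variable {r0 r1 r2 : ℕ}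

noncomputable def lieSpan (r0 r1 r2 : ℕ) : Submodule ℂ (Mat r0 r1 r2) :=
  Submodule.span ℂ {m | ∃ p q, P3lt r0 r1 r2 p q ∧ m = matE p q}

noncomputable def topSpan (r0 r1 r2 : ℕ) : Submodule ℂ (Mat r0 r1 r2) :=
  Submodule.span ℂ (Set.range fun p : Fin r0 × Fin r2 =>
    matE (Sum.inl p.1 : Idx r0 r1 r2) (Sum.inr (Sum.inr p.2)))

lemma matE_mem_lieSpan {p q : Idx r0 r1 r2} (h : P3lt r0 r1 r2 p q) :
    matE p q ∈ lieSpan r0 r1 r2 :=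
  Submodule.subset_span ⟨p, q, h, rfl⟩

lemma finrank_topSpan : Module.finrank ℂ (topSpan r0 r1 r2) = r0 * r2 := by
  rw [topSpan, finrank_span_matE_of_injective (f := fun p : Fin r0 × Fin r2 =>
    ((Sum.inl p.1 : Idx r0 r1 r2), (Sum.inr (Sum.inr p.2) : Idx r0 r1 r2)))
    (fun a b hab => by simp_all [Prod.ext_iff]), Fintype.card_prod, Fintype.card_fin,
    Fintype.card_fin]

lemma exists_eq_inl_of_P3lt_of_P3lt {p q s : Idx r0 r1 r2} (h : P3lt r0 r1 r2 p q)
    (h' : P3lt r0 r1 r2 q s) : ∃ i k, p = Sum.inl i ∧ s = Sum.inr (Sum.inr k) := by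
  rcases p with i | _ | _ <;> rcases q with _ | _ | _ <;> rcases s with _ | _ | k <;>
    first | exact ⟨i, k, rfl, rfl⟩ | simp [P3lt] at h h'

lemma lieSpan_mul_lieSpan_le : lieSpan r0 r1 r2 * lieSpan r0 r1 r2 ≤ topSpan r0 r1 r2 := by
  rw [lieSpan, Submodule.span_mul_span, Submodule.span_le]
  rintro _ ⟨_, ⟨p, q, hpq, rfl⟩, _, ⟨p', q', hpq', rfl⟩, rfl⟩
  dsimp only
  rw [matE_mul_matE]
  split_ifs with hq
  · subst hq
    obtain ⟨i, k, rfl, rfl⟩ := exists_eq_inl_of_P3lt_of_P3lt hpq hpq'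
    exact Submodule.subset_span ⟨(i, k), rfl⟩
  · exact zero_mem _

lemma map_ad_le_topSpan {x : Mat r0 r1 r2} (hx : x ∈ lieSpan r0 r1 r2) :
    (lieSpan r0 r1 r2).map (LieAlgebra.ad ℂ (Mat r0 r1 r2) x) ≤ topSpan r0 r1 r2 := by
  rw [Submodule.map_le_iff_le_comap]
  intro y hy
  rw [Submodule.mem_comap, LieAlgebra.ad_apply, Ring.lie_def]
  exact sub_mem (lieSpan_mul_lieSpan_le (Submodule.mul_mem_mul hx hy))
    (lieSpan_mul_lieSpan_le (Submodule.mul_mem_mul hy hx))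

lemma topSpan_le_map_ad_of_injective_left {σ : Fin r0 → Fin r1} (hσ : Function.Injective σ) :
    topSpan r0 r1 r2 ≤ (lieSpan r0 r1 r2).map (LieAlgebra.ad ℂ (Mat r0 r1 r2)
      (∑ i, matE (Sum.inl i) (Sum.inr (Sum.inl (σ i))))) := by
  rw [topSpan, Submodule.span_le]
  rintro _ ⟨⟨i, k⟩, rfl⟩
  refine ⟨matE (Sum.inr (Sum.inl (σ i))) (Sum.inr (Sum.inr k)), matE_mem_lieSpan trivial, ?_⟩
  rw [LieAlgebra.ad_apply, Ring.lie_def, Finset.sum_mul, Finset.mul_sum]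
  simp [matE_mul_matE, hσ.eq_iff]

lemma topSpan_le_map_ad_of_injective_right {τ : Fin r2 → Fin r1} (hτ : Function.Injective τ) :
    topSpan r0 r1 r2 ≤ (lieSpan r0 r1 r2).map (LieAlgebra.ad ℂ (Mat r0 r1 r2)
      (∑ k, matE (Sum.inr (Sum.inl (τ k))) (Sum.inr (Sum.inr k)))) := by
  rw [topSpan, Submodule.span_le]
  rintro _ ⟨⟨i, k⟩, rfl⟩
  refine ⟨-matE (Sum.inl i) (Sum.inr (Sum.inl (τ k))), neg_mem (matE_mem_lieSpan trivial), ?_⟩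
  rw [LieAlgebra.ad_apply, lie_neg, Ring.lie_def, Finset.sum_mul, Finset.mul_sum]
  simp [matE_mul_matE, hτ.eq_iff]

lemma exists_topSpan_le_map_ad (h : r0 ≤ r1 ∨ r2 ≤ r1) :
    ∃ x ∈ lieSpan r0 r1 r2,
      topSpan r0 r1 r2 ≤ (lieSpan r0 r1 r2).map (LieAlgebra.ad ℂ (Mat r0 r1 r2) x) := by
  rcases h with h | h
  · refine ⟨_, sum_mem fun i _ => ?_, topSpan_le_map_ad_of_injective_left (Fin.castLE_injective h)⟩
    exact matE_mem_lieSpan trivial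
  · refine ⟨_, sum_mem fun k _ => ?_, topSpan_le_map_ad_of_injective_right (Fin.castLE_injective h)⟩
    exact matE_mem_lieSpan trivial

end P3

theorem P3_breadth_easy_general (r0 r1 r2 : ℕ)
    (h : r0 ≤ r1 ∨ r2 ≤ r1) :
    let L : Submodule ℂ (Matrix (Fin r0 ⊕ Fin r1 ⊕ Fin r2) (Fin r0 ⊕ Fin r1 ⊕ Fin r2) ℂ) :=
      Submodule.span ℂ {m | ∃ p q, P3lt r0 r1 r2 p q ∧ m = matE p q}
    (∃ x ∈ L,
        Module.finrank ℂ
          ↥(Submodule.map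
            (LieAlgebra.ad ℂ (Matrix (Fin r0 ⊕ Fin r1 ⊕ Fin r2) (Fin r0 ⊕ Fin r1 ⊕ Fin r2) ℂ) x)
            L) = r0 * r2) ∧
      ∀ x ∈ L,
        Module.finrank ℂ
          ↥(Submodule.map
            (LieAlgebra.ad ℂ (Matrix (Fin r0 ⊕ Fin r1 ⊕ Fin r2) (Fin r0 ⊕ Fin r1 ⊕ Fin r2) ℂ) x)
            L) ≤ r0 * r2 := by
  intro L
  change (∃ x ∈ P3.lieSpan r0 r1 r2, _) ∧ ∀ x ∈ P3.lieSpan r0 r1 r2, _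
  refine ⟨?_, fun x hx => P3.finrank_topSpan (r1 := r1) ▸
    Submodule.finrank_mono (P3.map_ad_le_topSpan hx)⟩
  obtain ⟨x, hx, hle⟩ := P3.exists_topSpan_le_map_ad h
  refine ⟨x, hx, ?_⟩
  show Module.finrank ℂ ((P3.lieSpan r0 r1 r2).map (LieAlgebra.ad ℂ (P3.Mat r0 r1 r2) x)) = r0 * r2
  rw [(P3.map_ad_le_topSpan hx).antisymm hle, P3.finrank_topSpan]

/-- For the nilpotent Lie poset algebra `L = g(r₀,r₁,r₂)` of `P(r₀,r₁,r₂)`,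
if `r₁ ≥ r₀` or `r₁ ≥ r₂`, then `b(L) = r₀·r₂`. -/
theorem P3_breadth_easy (r0 r1 r2 : ℕ) (h0 : 1 ≤ r0) (h1 : 1 ≤ r1) (h2 : 1 ≤ r2)
    (h : r0 ≤ r1 ∨ r2 ≤ r1) :
    let L : Submodule ℂ (Matrix (Fin r0 ⊕ Fin r1 ⊕ Fin r2) (Fin r0 ⊕ Fin r1 ⊕ Fin r2) ℂ) :=
      Submodule.span ℂ {m | ∃ p q, P3lt r0 r1 r2 p q ∧ m = matE p q}
    (∃ x ∈ L,
        Module.finrank ℂ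
          ↥(Submodule.map
            (LieAlgebra.ad ℂ (Matrix (Fin r0 ⊕ Fin r1 ⊕ Fin r2) (Fin r0 ⊕ Fin r1 ⊕ Fin r2) ℂ) x)
            L) = r0 * r2) ∧
      ∀ x ∈ L,
        Module.finrank ℂ
          ↥(Submodule.map
            (LieAlgebra.ad ℂ (Matrix (Fin r0 ⊕ Fin r1 ⊕ Fin r2) (Fin r0 ⊕ Fin r1 ⊕ Fin r2) ℂ) x)
            L) ≤ r0 * r2 :=
  P3_breadth_easy_general r0 r1 r2 h
end

section
/- Let L = g(r_0, r_1, r_2) be the nilpotent Lie poset algebra of the three-level poset P(r_0,r_1,r_2). For x = Σ_{i=1}^{min(r_0,r_1)} E_{b_i,m_i}, the image of ad_x contains E_{b_i,t_j} for all 1 ≤ i ≤ min(r_0,r_1) and 1 ≤ j ≤ r_2; in particular if r_1 ≥ r_0 then rank(ad_x) ≥ r_0 r_2. -/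
attribute [local instance 100] LieRing.ofAssociativeRing

/-! Since no top element `tⱼ` is a bottom element, `E_{mᵢ,tⱼ} x = 0`, so
`[x, E_{mᵢ,tⱼ}] = x E_{mᵢ,tⱼ} = E_{bᵢ,tⱼ}`. For `r₀ ≤ r₁` these are `r₀ r₂` distinct matrix
units in the image of `ad_x`, hence linearly independent. -/

namespace Matrix

variable {ι α R : Type*} [Fintype ι] [DecidableEq α] [Fintype α] [Ring R]

theorem sum_single_mul_single_of_injective (f : ι → α) {g : ι → α} (hg : Function.Injective g)
    (i : ι) (c : α) :
    (∑ k, single (f k) (g k) (1 : R)) * single (g i) c 1 = single (f i) c 1 := by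
  rw [Finset.sum_mul, Finset.sum_eq_single i, single_mul_single_same, one_mul]
  · exact fun k _ hk => single_mul_single_of_ne _ _ _ _ (hg.ne hk) _
  · exact fun hi => absurd (Finset.mem_univ i) hi

theorem single_mul_sum_single_eq_zero (f g : ι → α) (a : α) {c : α} (hc : ∀ k, c ≠ f k) :
    single a c (1 : R) * ∑ k, single (f k) (g k) 1 = 0 := by
  rw [Finset.mul_sum]
  exact Finset.sum_eq_zero fun k _ => single_mul_single_of_ne _ _ _ _ (hc k) _

theorem lie_sum_single_single (f : ι → α) {g : ι → α} (hg : Function.Injective g)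
    (i : ι) {c : α} (hc : ∀ k, c ≠ f k) :
    ⁅∑ k, single (f k) (g k) (1 : R), single (g i) c 1⁆ =
      (single (f i) c 1 : Matrix α α R) := by
  rw [Ring.lie_def, sum_single_mul_single_of_injective f hg,
    single_mul_sum_single_eq_zero f g _ hc, sub_zero]

theorem card_le_finrank_of_single_mem {K ι' : Type*} [Field K] [Fintype ι']
    {e : ι' → α × α} (he : Function.Injective e) {S : Submodule K (Matrix α α K)}
    (hS : ∀ p, single (e p).1 (e p).2 1 ∈ S) :
    Fintype.card ι' ≤ Module.finrank K S := by
  have hli : LinearIndependent K fun p => single (e p).1 (e p).2 (1 : K) := by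
    convert (stdBasis K α α).linearIndependent.comp e he with p
    exact (stdBasis_eq_single K (e p).1 (e p).2).symm
  rw [← finrank_span_eq_card hli]
  exact Submodule.finrank_mono (Submodule.span_le.mpr (Set.range_subset_iff.mpr hS))

end Matrix

/-- For `L = g(r₀,r₁,r₂)` and `x = Σ_{i=1}^{min(r₀,r₁)} E_{bᵢ,mᵢ}`, the image of
`ad_x : L → L` contains `E_{bᵢ,tⱼ}` for all `i ≤ min(r₀,r₁)`, `j ≤ r₂`; in particular
if `r₁ ≥ r₀` then `rank(ad_x) ≥ r₀·r₂`. -/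
theorem P3_breadth_element_easy (r0 r1 r2 : ℕ) :
    let L : Submodule ℂ (Matrix (Fin r0 ⊕ Fin r1 ⊕ Fin r2) (Fin r0 ⊕ Fin r1 ⊕ Fin r2) ℂ) :=
      Submodule.span ℂ {m | ∃ p q, P3lt r0 r1 r2 p q ∧ m = matE p q}
    let x : Matrix (Fin r0 ⊕ Fin r1 ⊕ Fin r2) (Fin r0 ⊕ Fin r1 ⊕ Fin r2) ℂ :=
      ∑ i : Fin (min r0 r1),
        matE (Sum.inl (Fin.castLE (min_le_left r0 r1) i))
          (Sum.inr (Sum.inl (Fin.castLE (min_le_right r0 r1) i)))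
    (∀ (i : Fin (min r0 r1)) (j : Fin r2),
        matE (Sum.inl (Fin.castLE (min_le_left r0 r1) i)) (Sum.inr (Sum.inr j)) ∈
          Submodule.map
            (LieAlgebra.ad ℂ (Matrix (Fin r0 ⊕ Fin r1 ⊕ Fin r2) (Fin r0 ⊕ Fin r1 ⊕ Fin r2) ℂ) x)
            L) ∧
      (r0 ≤ r1 →
        r0 * r2 ≤
          Module.finrank ℂ
            ↥(Submodule.map
              (LieAlgebra.ad ℂ (Matrix (Fin r0 ⊕ Fin r1 ⊕ Fin r2) (Fin r0 ⊕ Fin r1 ⊕ Fin r2) ℂ) x)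
              L)) := by
  intro L x
  let b : Fin (min r0 r1) → Fin r0 ⊕ Fin r1 ⊕ Fin r2 :=
    fun i => Sum.inl (Fin.castLE (min_le_left r0 r1) i)
  let m : Fin (min r0 r1) → Fin r0 ⊕ Fin r1 ⊕ Fin r2 :=
    fun i => Sum.inr (Sum.inl (Fin.castLE (min_le_right r0 r1) i))
  have hm : Function.Injective m := fun i i' h => by simpa [m] using h
  have image_mem : ∀ i j, matE (b i) (Sum.inr (Sum.inr j)) ∈
      L.map (LieAlgebra.ad ℂ _ x) := fun i j =>
    ⟨matE (m i) (Sum.inr (Sum.inr j)),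
      Submodule.subset_span ⟨m i, Sum.inr (Sum.inr j), trivial, rfl⟩,
      Matrix.lie_sum_single_single b hm i (by simp [b])⟩
  refine ⟨image_mem, fun h => ?_⟩
  let e : Fin r0 × Fin r2 → (Fin r0 ⊕ Fin r1 ⊕ Fin r2) × (Fin r0 ⊕ Fin r1 ⊕ Fin r2) :=
    fun p => (Sum.inl p.1, Sum.inr (Sum.inr p.2))
  have he : Function.Injective e := fun p p' h => by simpa [e, Prod.ext_iff] using h
  simpa using Matrix.card_le_finrank_of_single_mem he fun p =>
    (by simpa [b] using image_mem (Fin.castLE (le_min le_rfl h) p.1) p.2 :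
      matE (Sum.inl p.1) (Sum.inr (Sum.inr p.2)) ∈ _)
end

section
/- Let P be a finite poset and L = g^≺(P) its nilpotent Lie poset algebra. Then dim(L/Z(L)) equals the number of strict relations p ≺ q of P such that not both p is minimal and q is maximal in P. -/
/-- The centralizer of a submodule `L` of a matrix algebra, under the commutator
bracket: all matrices commuting (in the Lie sense) with every element of `L`. -/
noncomputable def lieCentralizer {α : Type*} [Fintype α] [DecidableEq α]
    (L : Submodule ℂ (Matrix α α ℂ)) : Submodule ℂ (Matrix α α ℂ) where
  carrier := {z | ∀ y ∈ L, ⁅z, y⁆ = 0}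
  add_mem' := by
    intro a b ha hb y hy
    have h1 := ha y hy
    have h2 := hb y hy
    rw [Ring.lie_def] at h1 h2 ⊢
    rw [add_mul, mul_add, add_sub_add_comm, h1, h2, add_zero]
  zero_mem' := by
    intro y hy
    rw [Ring.lie_def, zero_mul, mul_zero, sub_zero]
  smul_mem' := by
    intro c a ha y hy
    have h1 := ha y hy
    rw [Ring.lie_def] at h1 ⊢
    rw [smul_mul_assoc, mul_smul_comm, ← smul_sub, h1, smul_zero]

/-!
Write `M_s` for the span of the matrix units `E p q` with `(p, q) ∈ s`; a matrix lies in `M_s`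
exactly when it vanishes off `s`, and `dim M_s = |s|`. So `L = M_{≺}` and it suffices to show
`Z(L) = M_{Rel_E}`. For `p ≺ q`, the entry `z p q` of `z ∈ Z(L)` reappears, up to sign, as the
`(r, q)` entry of `⁅z, E r p⁆` when `r ≺ p`, and as the `(p, r)` entry of `⁅z, E q r⁆` when
`q ≺ r`; so it vanishes unless `p` is minimal and `q` is maximal. Conversely such an `E p q`
has zero product with every `E r s`, `r ≺ s`, on either side.
-/

open Module

section MatrixUnitSpan

variable {α : Type*} [DecidableEq α]

noncomputable def matrixUnitSpan (s : Set (α × α)) : Submodule ℂ (Matrix α α ℂ) :=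
  Submodule.span ℂ ((fun pq : α × α => matE pq.1 pq.2) '' s)

theorem matrixUnitSpan_mono {s t : Set (α × α)} (h : s ⊆ t) :
    matrixUnitSpan s ≤ matrixUnitSpan t :=
  Submodule.span_mono (Set.image_mono h)

variable [Fintype α]

theorem mem_matrixUnitSpan_iff {s : Set (α × α)} {z : Matrix α α ℂ} :
    z ∈ matrixUnitSpan s ↔ ∀ p q, (p, q) ∉ s → z p q = 0 := by
  constructor
  · intro hz p q hpq
    induction hz using Submodule.span_induction with
    | mem x hx =>
      obtain ⟨⟨p', q'⟩, hmem, rfl⟩ := hx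
      dsimp only
      rw [matE, Matrix.single_apply_of_ne]
      rintro ⟨rfl, rfl⟩
      exact hpq hmem
    | zero => rfl
    | add x y _ _ hx hy => simp [hx, hy]
    | smul a x _ hx => simp [hx]
  · intro h
    rw [Matrix.matrix_eq_sum_single z]
    refine Submodule.sum_mem _ fun p _ => Submodule.sum_mem _ fun q _ => ?_
    by_cases hpq : (p, q) ∈ s
    · rw [← mul_one (z p q), ← smul_eq_mul, ← Matrix.smul_single]
      exact Submodule.smul_mem _ _ (Submodule.subset_span ⟨(p, q), hpq, rfl⟩)
    · simp [h p q hpq]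

theorem finrank_matrixUnitSpan (s : Set (α × α)) :
    finrank ℂ (matrixUnitSpan s) = s.ncard := by
  classical
  have hli : LinearIndependent ℂ (fun pq : s => matE pq.1.1 pq.1.2) := by
    convert (Matrix.stdBasis ℂ α α).linearIndependent.comp _ Subtype.val_injective with pq
    exact (Matrix.stdBasis_eq_single ..).symm
  rw [matrixUnitSpan, Set.image_eq_range, finrank_span_eq_card hli,
    ← Nat.card_eq_fintype_card, Nat.card_coe_set_eq]

end MatrixUnitSpan

section Bracket

variable {α : Type*} [Fintype α] [DecidableEq α]

theorem mem_lieCentralizer_span_iff {s : Set (Matrix α α ℂ)} {z : Matrix α α ℂ} :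
    z ∈ lieCentralizer (Submodule.span ℂ s) ↔ ∀ y ∈ s, ⁅z, y⁆ = 0 := by
  refine ⟨fun hz y hy => hz y (Submodule.subset_span hy), fun hz y hy => ?_⟩
  induction hy using Submodule.span_induction with
  | mem x hx => exact hz x hx
  | zero => rw [Ring.lie_def, mul_zero, zero_mul, sub_zero]
  | add x y _ _ hx hy =>
    rw [Ring.lie_def, sub_eq_zero] at hx hy ⊢
    rw [mul_add, add_mul, hx, hy]
  | smul a x _ hx =>
    rw [Ring.lie_def, sub_eq_zero] at hx ⊢
    rw [mul_smul_comm, smul_mul_assoc, hx]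

theorem mem_lieCentralizer_matrixUnitSpan_iff {s : Set (α × α)} {z : Matrix α α ℂ} :
    z ∈ lieCentralizer (matrixUnitSpan s) ↔ ∀ pq ∈ s, ⁅z, matE pq.1 pq.2⁆ = 0 :=
  mem_lieCentralizer_span_iff.trans Set.forall_mem_image

theorem lie_matE_apply_of_ne_left (z : Matrix α α ℂ) {p q : α} (r : α) (h : p ≠ q) :
    ⁅z, matE r p⁆ r q = -z p q := by
  simp [Ring.lie_def, matE, Matrix.mul_single_apply_of_ne (hbj := h.symm)]

theorem lie_matE_apply_of_ne_right (z : Matrix α α ℂ) {p q : α} (r : α) (h : p ≠ q) :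
    ⁅z, matE q r⁆ p r = z p q := by
  simp [Ring.lie_def, matE, Matrix.single_mul_apply_of_ne (h := h)]

theorem lie_matE_matE_eq_zero {p q r s : α} (hqr : q ≠ r) (hsp : s ≠ p) :
    ⁅matE p q, matE r s⁆ = 0 := by
  rw [Ring.lie_def, matE, matE, Matrix.single_mul_single_of_ne (h := hqr),
    Matrix.single_mul_single_of_ne (h := hsp), sub_zero]

end Bracket

section PosetAlgebra

variable (α : Type*) [PartialOrder α]

def strictRelations : Set (α × α) := {pq | pq.1 < pq.2}

def extremalRelations : Set (α × α) := {pq | pq.1 < pq.2 ∧ IsMin pq.1 ∧ IsMax pq.2}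

theorem extremalRelations_subset_strictRelations :
    extremalRelations α ⊆ strictRelations α :=
  fun _ h => h.1

variable {α} [Fintype α] [DecidableEq α]

theorem center_matrixUnitSpan_strictRelations :
    matrixUnitSpan (strictRelations α) ⊓ lieCentralizer (matrixUnitSpan (strictRelations α)) =
      matrixUnitSpan (extremalRelations α) := by
  refine le_antisymm ?_ (le_inf
    (matrixUnitSpan_mono (extremalRelations_subset_strictRelations α)) ?_)
  · intro z hz
    obtain ⟨hzL, hzC⟩ := Submodule.mem_inf.mp hz
    rw [mem_lieCentralizer_matrixUnitSpan_iff] at hzC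
    rw [mem_matrixUnitSpan_iff] at hzL ⊢
    intro p q hpq
    by_cases hlt : p < q
    · have hext : ¬IsMin p ∨ ¬IsMax q := by
        by_contra! h
        exact hpq ⟨hlt, h⟩
      rcases hext with hp | hq
      · obtain ⟨r, hr⟩ := not_isMin_iff.mp hp
        simpa [lie_matE_apply_of_ne_left z r hlt.ne] using
          congrFun (congrFun (hzC (r, p) hr) r) q
      · obtain ⟨r, hr⟩ := not_isMax_iff.mp hq
        simpa [lie_matE_apply_of_ne_right z r hlt.ne] using
          congrFun (congrFun (hzC (q, r) hr) p) r
    · exact hzL p q hlt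
  · refine Submodule.span_le.mpr ?_
    rintro _ ⟨⟨p, q⟩, ⟨-, hp, hq⟩, rfl⟩
    rw [SetLike.mem_coe, mem_lieCentralizer_matrixUnitSpan_iff]
    rintro ⟨r, s⟩ (hrs : r < s)
    exact lie_matE_matE_eq_zero (fun h : q = r => hq.not_lt (h ▸ hrs))
      (fun h : s = p => hp.not_lt (h ▸ hrs))

end PosetAlgebra

theorem finrank_quotient_comap_subtype {K V : Type*} [Field K] [AddCommGroup V] [Module K V]
    {L N : Submodule K V} [FiniteDimensional K L] (h : N ≤ L) :
    finrank K (L ⧸ N.comap L.subtype) = finrank K L - finrank K N := by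
  rw [Submodule.finrank_quotient, (Submodule.comapSubtypeEquivOfLe h).finrank_eq]

/-- For a finite poset `P` and `L = g^≺(P)`, the dimension of `L/Z(L)` equals the
number of strict relations `p ≺ q` of `P` such that not both `p` is minimal and
`q` is maximal. -/
theorem nilpotent_lie_poset_dim_quotient_center (α : Type*) [Fintype α] [DecidableEq α]
    [PartialOrder α] :
    let L : Submodule ℂ (Matrix α α ℂ) :=
      Submodule.span ℂ {m : Matrix α α ℂ | ∃ p q : α, p < q ∧ m = matE p q}
    Module.finrank ℂ (↥L ⧸ Submodule.comap L.subtype (L ⊓ lieCentralizer L)) =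
      Set.ncard {pq : α × α | pq.1 < pq.2 ∧
        ¬((∀ r, ¬ r < pq.1) ∧ (∀ r, ¬ pq.2 < r))} := by
  intro L
  have hL : L = matrixUnitSpan (strictRelations α) := by
    show Submodule.span ℂ _ = Submodule.span ℂ _
    congr 1
    ext m
    simp [strictRelations, eq_comm]
  have hrel : {pq : α × α | pq.1 < pq.2 ∧ ¬((∀ r, ¬ r < pq.1) ∧ (∀ r, ¬ pq.2 < r))} =
      strictRelations α \ extremalRelations α := by
    ext
    simp only [strictRelations, extremalRelations, Set.mem_sdiff, Set.mem_ofPred_eq,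
      isMin_iff_forall_not_lt, isMax_iff_forall_not_lt]
    tauto
  rw [finrank_quotient_comap_subtype inf_le_left, hL, center_matrixUnitSpan_strictRelations,
    finrank_matrixUnitSpan, finrank_matrixUnitSpan, hrel,
    Set.ncard_sdiff (extremalRelations_subset_strictRelations α)]
end
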